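/- arXiv:math/0506546 — 2 statements merged into one kernel-verified Lean document; each statement's English description precedes it below -/
import Mathlib

section
/- For all integers n ≥ 1 and r ≥ 1, the number of cycloribbons [I,c], where I is a composition of n and c ∈ {1,…,r}^n, equals r(r+1)^{n-1}. -/
/-!
STATEMENT 0: For all integers `n ≥ 1` and `r ≥ 1`, the number of cycloribbons `[I,c]`,
where `I` is a composition of `n` and `c ∈ {1,…,r}^n`, equals `r (r+1)^(n-1)`.

A colored ribbon `[I,c]` is a composition `I` of `n` together with a word
`c : Fin n → Fin r` (viewed as the filling of the ribbon diagram of `I` whose row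
reading is `c`).  Cells `i` and `i+1` (0-indexed) are in the same row iff `i` is not a
descent of `I` (i.e. `i+1` is not a partial sum of `I`), and in the same column iff `i`
is a descent of `I`.  The filling is a cycloribbon iff it weakly increases along rows
and weakly decreases down columns.
-/

namespace AKSPaper

/-- `i` (0-indexed, `i+1 < n`) is a descent of the composition `I` of `n`:
the ribbon diagram of `I` has a column step between cells `i` and `i+1`,
i.e. `i+1` is a partial sum of the parts of `I`. -/
def descComp {n : ℕ} (I : Composition n) (i : ℕ) : Prop :=
  i + 1 < n ∧ ∃ k ∈ Finset.range (n + 1), (I.blocks.take k).sum = i + 1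

/-- `[I, c]` is a cycloribbon: the filling of the ribbon diagram of `I` with row
reading `c` is weakly increasing along rows and weakly decreasing down columns. -/
def IsCycloribbon {n r : ℕ} (I : Composition n) (c : Fin n → Fin r) : Prop :=
  ∀ (i : ℕ) (h : i + 1 < n),
    (descComp I i → c ⟨i + 1, h⟩ ≤ c ⟨i, by omega⟩) ∧
    (¬ descComp I i → c ⟨i, by omega⟩ ≤ c ⟨i + 1, h⟩)

/-! ### Auxiliary machinery -/

instance descCompDecidable {n : ℕ} (I : Composition n) (i : ℕ) : Decidable (descComp I i) :=
  inferInstanceAs (Decidable (_ ∧ _))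

/-- Validity of a sequence of colors together with descent bits. -/
def StepValid {r m : ℕ} (c : Fin (m+1) → Fin r) (b : Fin m → Bool) : Prop :=
  ∀ i : Fin m, if b i then c i.succ ≤ c i.castSucc else c i.castSucc ≤ c i.succ

abbrev T (r m : ℕ) := {q : (Fin (m+1) → Fin r) × (Fin m → Bool) // StepValid q.1 q.2}

def encode {r : ℕ} (d : Fin r) (b : Bool) : Fin (r+1) :=
  if b then d.castSucc else d.succ

def decode {r : ℕ} (e : Fin r) (j : Fin (r+1)) : Fin r × Bool :=
  if h : (j : ℕ) ≤ (e : ℕ) then (⟨j, lt_of_le_of_lt h e.isLt⟩, true)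
  else (⟨(j : ℕ) - 1, by have := j.isLt; omega⟩, false)

theorem decode_valid {r : ℕ} (e : Fin r) (j : Fin (r+1)) :
    if (decode e j).2 then (decode e j).1 ≤ e else e ≤ (decode e j).1 := by
  rcases le_or_gt (j : ℕ) (e : ℕ) with h | h
  · simp [decode, h, Fin.le_def]
  · simp [decode, h.not_ge, Fin.le_def]
    omega

theorem decode_encode {r : ℕ} (e d : Fin r) (b : Bool)
    (hv : if b then d ≤ e else e ≤ d) : decode e (encode d b) = (d, b) := by
  cases b
  · simp only [Bool.false_eq_true, if_false] at hv
    have h : ¬ ((d.succ : Fin (r+1)) : ℕ) ≤ (e : ℕ) := by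
      simp only [Fin.val_succ]
      simp only [Fin.le_def] at hv
      omega
    simp only [encode, Bool.false_eq_true, if_false, decode, dif_neg h]
    rw [Prod.mk.injEq]
    exact ⟨Fin.ext (by simp), rfl⟩
  · simp only [if_true] at hv
    have h : ((d.castSucc : Fin (r+1)) : ℕ) ≤ (e : ℕ) := hv
    simp only [encode, if_true, decode, dif_pos h]
    rw [Prod.mk.injEq]
    exact ⟨Fin.ext (by simp), rfl⟩

theorem encode_decode {r : ℕ} (e : Fin r) (j : Fin (r+1)) :
    encode (decode e j).1 (decode e j).2 = j := by
  rcases le_or_gt (j : ℕ) (e : ℕ) with h | h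
  · simp only [decode, dif_pos h]
    apply Fin.ext; simp [encode]
  · simp only [decode, dif_neg h.not_ge]
    apply Fin.ext
    simp only [encode, Bool.false_eq_true, if_false, Fin.val_succ]
    omega

/-- Splitting off the last step. -/
def stepEquiv (r m : ℕ) : T r (m+1) ≃ T r m × Fin (r+1) where
  toFun q :=
    (⟨(fun i => q.1.1 i.castSucc, fun i => q.1.2 i.castSucc), by
        intro i
        have h := q.2 i.castSucc
        rwa [Fin.succ_castSucc] at h⟩,
      encode (q.1.1 (Fin.last (m+1))) (q.1.2 (Fin.last m)))
  invFun y :=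
    ⟨(Fin.snoc y.1.1.1 (decode (y.1.1.1 (Fin.last m)) y.2).1,
      Fin.snoc y.1.1.2 (decode (y.1.1.1 (Fin.last m)) y.2).2), by
      intro i
      refine Fin.lastCases ?_ ?_ i
      · simp only [Fin.snoc_last, Fin.succ_last, Fin.snoc_castSucc]
        exact decode_valid _ _
      · intro i'
        simp only [Fin.snoc_castSucc, Fin.succ_castSucc]
        exact y.1.2 i'⟩
  left_inv := by
    rintro ⟨⟨c, b⟩, hq⟩
    have hv : if b (Fin.last m) then c (Fin.last (m+1)) ≤ c ((Fin.last m).castSucc)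
        else c ((Fin.last m).castSucc) ≤ c (Fin.last (m+1)) := by
      have h := hq (Fin.last m); rwa [Fin.succ_last] at h
    apply Subtype.ext
    dsimp only
    rw [decode_encode (c ((Fin.last m).castSucc)) (c (Fin.last (m+1))) (b (Fin.last m)) hv]
    rw [Prod.mk.injEq]
    exact ⟨Fin.snoc_init_self c, Fin.snoc_init_self b⟩
  right_inv := by
    rintro ⟨⟨⟨c', b'⟩, hq⟩, j⟩
    rw [Prod.mk.injEq]
    constructor
    · apply Subtype.ext
      dsimp only
      rw [Prod.mk.injEq]
      constructor
      · funext i; exact Fin.snoc_castSucc _ _ _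
      · funext i; exact Fin.snoc_castSucc _ _ _
    · dsimp only
      rw [Fin.snoc_last, Fin.snoc_last]
      exact encode_decode _ _

theorem cardT (r m : ℕ) : Nat.card (T r m) = r * (r + 1) ^ m := by
  induction m with
  | zero =>
      have e : T r 0 ≃ Fin r :=
        { toFun := fun q => q.1.1 0
          invFun := fun d => ⟨(fun _ => d, Fin.elim0), fun i => i.elim0⟩
          left_inv := by
            rintro ⟨⟨c, b⟩, hq⟩
            apply Subtype.ext
            rw [Prod.mk.injEq]
            constructor
            · funext i; exact congrArg c (Fin.ext (by omega))
            · funext i; exact i.elim0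
          right_inv := fun d => rfl }
      rw [Nat.card_congr e]
      simp
  | succ m ih =>
      rw [Nat.card_congr (stepEquiv r m), Nat.card_prod, ih]
      simp only [Nat.card_eq_fintype_card, Fintype.card_fin]
      ring

theorem mem_compositionAsSetEquiv {n : ℕ} (c : CompositionAsSet n) (i : Fin (n - 1)) :
    i ∈ compositionAsSetEquiv n c ↔ ∃ j ∈ c.boundaries, (j : ℕ) = (i : ℕ) + 1 := by
  simp only [compositionAsSetEquiv, Equiv.coe_fn_mk, Set.mem_toFinset, Set.mem_setOf_eq]
  constructor
  · intro h
    exact ⟨_, h, by simp [Nat.add_comm]⟩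
  · rintro ⟨j, hj, hval⟩
    convert hj using 2
    omega

theorem descComp_iff_mem {m : ℕ} (I : Composition (m + 1)) (i : Fin m) :
    descComp I (i : ℕ) ↔ i ∈ compositionAsSetEquiv (m + 1) (compositionEquiv (m + 1) I) := by
  rw [mem_compositionAsSetEquiv]
  have hb : (compositionEquiv (m + 1) I).boundaries = I.boundaries :=
    I.toCompositionAsSet_boundaries
  constructor
  · rintro ⟨-, k, hk, hsum⟩
    have hkl : k ≤ I.length := by
      by_contra hl
      push_neg at hl
      have h2 : I.sizeUpTo k = m + 1 := I.sizeUpTo_ofLength_le k hl.le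
      have h3 : I.sizeUpTo k = (i : ℕ) + 1 := hsum
      have := i.isLt
      omega
    refine ⟨I.boundary ⟨k, Nat.lt_succ_of_le hkl⟩, ?_, ?_⟩
    · rw [hb]
      simp only [Composition.boundaries, Finset.mem_map]
      exact ⟨⟨k, Nat.lt_succ_of_le hkl⟩, Finset.mem_univ _, rfl⟩
    · exact hsum
  · rintro ⟨j, hj, hval⟩
    refine ⟨by have := i.isLt; omega, ?_⟩
    rw [hb] at hj
    simp only [Composition.boundaries, Finset.mem_map] at hj
    obtain ⟨k, -, hk⟩ := hj
    refine ⟨k, Finset.mem_range.mpr ?_, ?_⟩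
    · have h1 := k.isLt
      have h2 := I.length_le
      omega
    · show I.sizeUpTo k = (i : ℕ) + 1
      rw [← hval, ← hk]
      rfl

/-- Cycloribbons with `n = m+1` cells correspond to valid colored step sequences. -/
def cycloEquiv {r m : ℕ} :
    {p : Composition (m+1) × (Fin (m+1) → Fin r) // IsCycloribbon p.1 p.2} ≃ T r m where
  toFun p :=
    ⟨(p.1.2, fun i => decide (descComp p.1.1 (i : ℕ))), by
      intro i
      have h := p.2 (i : ℕ) (Nat.succ_lt_succ i.isLt)
      by_cases hd : descComp p.1.1 (i : ℕ)
      · simp only [decide_eq_true hd, if_true]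
        exact h.1 hd
      · simp only [decide_eq_false hd, Bool.false_eq_true, if_false]
        exact h.2 hd⟩
  invFun t :=
    ⟨((compositionEquiv (m+1)).symm ((compositionAsSetEquiv (m+1)).symm
        (Finset.univ.filter (fun i : Fin m => t.1.2 i = true))), t.1.1), by
      intro i h
      have hiF : descComp ((compositionEquiv (m+1)).symm ((compositionAsSetEquiv (m+1)).symm
          (Finset.univ.filter (fun i : Fin m => t.1.2 i = true)))) i
            ↔ t.1.2 ⟨i, by omega⟩ = true := by
        have h1 := descComp_iff_mem ((compositionEquiv (m+1)).symm
          ((compositionAsSetEquiv (m+1)).symm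
            (Finset.univ.filter (fun i : Fin m => t.1.2 i = true)))) ⟨i, by omega⟩
        rw [Equiv.apply_symm_apply, Equiv.apply_symm_apply] at h1
        simpa using h1
      constructor
      · intro hd
        have hv := t.2 ⟨i, by omega⟩
        rw [if_pos (hiF.mp hd)] at hv
        exact hv
      · intro hd
        have hv := t.2 ⟨i, by omega⟩
        rw [if_neg (fun hb => hd (hiF.mpr hb))] at hv
        exact hv⟩
  left_inv := by
    rintro ⟨⟨I, c⟩, hp⟩
    apply Subtype.ext
    dsimp only
    rw [Prod.mk.injEq]
    refine ⟨?_, rfl⟩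
    have hfil : (Finset.univ.filter (fun i : Fin m => decide (descComp I (i : ℕ)) = true))
        = compositionAsSetEquiv (m+1) (compositionEquiv (m+1) I) := by
      ext i
      simp only [Finset.mem_filter, Finset.mem_univ, true_and, decide_eq_true_eq]
      exact descComp_iff_mem I i
    rw [hfil, Equiv.symm_apply_apply, Equiv.symm_apply_apply]
  right_inv := by
    rintro ⟨⟨c, b⟩, ht⟩
    apply Subtype.ext
    dsimp only
    rw [Prod.mk.injEq]
    refine ⟨rfl, ?_⟩
    funext i
    have h1 := descComp_iff_mem ((compositionEquiv (m+1)).symm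
      ((compositionAsSetEquiv (m+1)).symm
        (Finset.univ.filter (fun i : Fin m => b i = true)))) i
    rw [Equiv.apply_symm_apply, Equiv.apply_symm_apply] at h1
    simp only [Finset.mem_filter, Finset.mem_univ, true_and] at h1
    by_cases hd : descComp ((compositionEquiv (m+1)).symm
      ((compositionAsSetEquiv (m+1)).symm
        (Finset.univ.filter (fun i : Fin m => b i = true)))) (i : ℕ)
    · rw [decide_eq_true hd]
      exact (h1.mp hd).symm
    · rw [decide_eq_false hd]
      cases hbi : b i
      · rfl
      · exact absurd (h1.mpr hbi) hd

/-- The number of cycloribbons with `n` cells and at most `r` colors is `r (r+1)^(n-1)`. -/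
theorem card_cycloribbons (n r : ℕ) (hn : 1 ≤ n) (hr : 1 ≤ r) :
    Nat.card {p : Composition n × (Fin n → Fin r) // IsCycloribbon p.1 p.2} =
      r * (r + 1) ^ (n - 1) := by
  obtain ⟨m, rfl⟩ : ∃ m, n = m + 1 := ⟨n - 1, by omega⟩
  rw [Nat.card_congr (cycloEquiv (r := r) (m := m)), cardT]
  simp

end AKSPaper
end

section
/- In the 0-Hecke algebra H_n(0), the elements Y_j(t,u), defined by Y_j(t,u) := T_j if t > u and Y_j(t,u) := 1 + T_j if t ≤ u, satisfy the quantum Yang-Baxter equation: for all parameters t, u, v in a totally ordered set and all 1 ≤ i ≤ n-2, Y_i(t,u) Y_{i+1}(t,v) Y_i(u,v) = Y_{i+1}(u,v) Y_i(t,v) Y_{i+1}(t,u). -/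
/-!
STATEMENT 2: In the 0-Hecke algebra `H_n(0)`, the elements `Y_j(t,u)` (equal to `T_j`
if `t > u` and `1 + T_j` if `t ≤ u`) satisfy the quantum Yang-Baxter equation:
for all parameters `t, u, v` in a totally ordered set and all `1 ≤ i ≤ n-2`,
`Y_i(t,u) Y_{i+1}(t,v) Y_i(u,v) = Y_{i+1}(u,v) Y_i(t,v) Y_{i+1}(t,u)`.

Here positions are 0-indexed: `j` ranges over `0 ≤ j` with `j + 2 < n`, so that both
`Y_j` and `Y_{j+1}` are defined.
-/

namespace AKSPaper

noncomputable section

/-- Defining relations of the 0-Hecke algebra `H_n(0)`.  The generator indexed by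
`i : Fin (n-1)` is `T_{i+1}` (1-indexed), acting on 0-indexed positions `i, i+1`. -/
inductive HeckeRel (n : ℕ) :
    FreeAlgebra ℂ (Fin (n - 1)) → FreeAlgebra ℂ (Fin (n - 1)) → Prop
  | quad (i : Fin (n - 1)) :
      HeckeRel n (FreeAlgebra.ι ℂ i * (1 + FreeAlgebra.ι ℂ i)) 0
  | braid (i j : Fin (n - 1)) (h : (i : ℕ) + 1 = j) :
      HeckeRel n (FreeAlgebra.ι ℂ i * FreeAlgebra.ι ℂ j * FreeAlgebra.ι ℂ i)
        (FreeAlgebra.ι ℂ j * FreeAlgebra.ι ℂ i * FreeAlgebra.ι ℂ j)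
  | comm (i j : Fin (n - 1)) (h : (i : ℕ) + 2 ≤ j ∨ (j : ℕ) + 2 ≤ i) :
      HeckeRel n (FreeAlgebra.ι ℂ i * FreeAlgebra.ι ℂ j)
        (FreeAlgebra.ι ℂ j * FreeAlgebra.ι ℂ i)

/-- The 0-Hecke algebra `H_n(0)`. -/
abbrev H (n : ℕ) := RingQuot (HeckeRel n)

/-- The generator `T_{i+1}` of `H_n(0)`. -/
def Tgen {n : ℕ} (i : Fin (n - 1)) : H n :=
  RingQuot.mkAlgHom ℂ (HeckeRel n) (FreeAlgebra.ι ℂ i)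

/-- The generator `T` acting on the 0-indexed positions `j`, `j+1`. -/
def Tpos {n : ℕ} (j : ℕ) (h : j + 1 < n) : H n := Tgen ⟨j, by omega⟩

/-- The elementary transposition exchanging the 0-indexed positions `j`, `j+1`. -/
def sw {n : ℕ} (j : ℕ) (h : j + 1 < n) : Equiv.Perm (Fin n) :=
  Equiv.swap ⟨j, by omega⟩ ⟨j + 1, h⟩

/-- The number of inversions of a permutation. -/
def invnum {n : ℕ} (σ : Equiv.Perm (Fin n)) : ℕ :=
  (Finset.univ.filter fun p : Fin n × Fin n => p.1 < p.2 ∧ σ p.2 < σ p.1).card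

/-- The Yang-Baxter element `Y_j(t, u)`: `T_j` if `t > u`, `1 + T_j` if `t ≤ u`. -/
def Ygen {n : ℕ} {α : Type*} [LinearOrder α] (j : ℕ) (h : j + 1 < n) (t u : α) : H n :=
  if t ≤ u then 1 + Tpos j h else Tpos j h

/-- `Y` is the family of Yang-Baxter basis elements: `Y_id(x) = 1` and
`Y_{s_j τ}(x) = Y_j(x_{τ⁻¹(j)}, x_{τ⁻¹(j+1)}) * Y_τ(x)` whenever `s_j τ` has one more
inversion than `τ`. -/
def IsYBFamily {n : ℕ} {α : Type*} [LinearOrder α]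
    (Y : Equiv.Perm (Fin n) → (Fin n → α) → H n) : Prop :=
  (∀ x, Y 1 x = 1) ∧
  ∀ (j : ℕ) (h : j + 1 < n) (τ : Equiv.Perm (Fin n)) (x : Fin n → α),
    invnum (sw j h * τ) = invnum τ + 1 →
    Y (sw j h * τ) x =
      Ygen j h (x (τ⁻¹ ⟨j, by omega⟩)) (x (τ⁻¹ ⟨j + 1, h⟩)) * Y τ x

/-- `i` (0-indexed, `i+1 < n`) is a descent of the permutation `σ`. -/
def descPerm {n : ℕ} (σ : Equiv.Perm (Fin n)) (i : ℕ) : Prop :=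
  ∃ h : i + 1 < n, σ ⟨i + 1, h⟩ < σ ⟨i, by omega⟩

/-!
Write `Y_j(t,u) = T_j + [t ≤ u]`. Expanding `(a + p)(b + q)(a + r)` with `a² = -a` gives
`aba + r·ab + p·ba + (q(p + r) - q)·a + pr·b + pqr`. For the indicators `p = [t ≤ u]`,
`q = [t ≤ v]`, `r = [u ≤ v]`, transitivity of `≤` (in both directions) is exactly
`q(p + r) = pr + q`, so this is `aba + r·ab + p·ba + pr·(a + b) + pqr`. The right-hand side is
the same expression with `a, p` and `b, r` exchanged, and the braid relation `aba = bab` finishes.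
-/

theorem add_natCast_mul_add_natCast_mul_add_natCast {R : Type*} [Ring R] {x : R}
    (hx : x * x = -x) (y : R) {p q r : ℕ} (hpqr : q * (p + r) = p * r + q) :
    (x + p) * (y + q) * (x + r) =
      x * y * x + r * (x * y) + p * (y * x) + (p * r : ℕ) * (x + y) + (p * q * r : ℕ) :=
  calc (x + p) * (y + q) * (x + r)
      = x * y * x + q * (x * x) + r * (x * y) + p * (y * x) + (q * (p + r) : ℕ) * x
          + (p * r : ℕ) * y + (p * q * r : ℕ) := by
        push_cast
        simp only [add_mul, mul_add, ← nsmul_eq_mul, ← nsmul_eq_mul', smul_add,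
          smul_mul_assoc, mul_assoc]
        module
    _ = _ := by rw [hx, hpqr]; push_cast; noncomm_ring

theorem braid_add_natCast {R : Type*} [Ring R] {a b : R} (ha : a * a = -a) (hb : b * b = -b)
    (hab : a * b * a = b * a * b) {p q r : ℕ} (hpqr : q * (p + r) = p * r + q) :
    (a + p) * (b + q) * (a + r) = (b + r) * (a + q) * (b + p) := by
  rw [add_natCast_mul_add_natCast_mul_add_natCast ha b hpqr,
    add_natCast_mul_add_natCast_mul_add_natCast hb a (by linarith), hab,
    show r * p = p * r by ring, show r * q * p = p * q * r by ring, add_comm b a]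
  abel

theorem ite_le_mul_add_ite_le {α : Type*} [LinearOrder α] (t u v : α) :
    (if t ≤ v then 1 else 0) * ((if t ≤ u then 1 else 0) + (if u ≤ v then 1 else 0)) =
      (if t ≤ u then 1 else 0) * (if u ≤ v then 1 else 0) + (if t ≤ v then 1 else 0 : ℕ) := by
  split_ifs <;> first | rfl | order

theorem Tgen_mul_self {n : ℕ} (i : Fin (n - 1)) : Tgen i * Tgen i = -Tgen i := by
  have hquad := RingQuot.mkAlgHom_rel ℂ (HeckeRel.quad i)
  rw [map_mul, map_add, map_one, map_zero, mul_add, mul_one] at hquad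
  exact eq_neg_of_add_eq_zero_right hquad

theorem Tgen_braid {n : ℕ} (i j : Fin (n - 1)) (hij : (i : ℕ) + 1 = j) :
    Tgen i * Tgen j * Tgen i = Tgen j * Tgen i * Tgen j := by
  simpa only [Tgen, map_mul] using RingQuot.mkAlgHom_rel ℂ (HeckeRel.braid i j hij)

theorem Ygen_eq_Tpos_add {n : ℕ} {α : Type*} [LinearOrder α] (j : ℕ) (h : j + 1 < n) (t u : α) :
    Ygen j h t u = Tpos j h + ((if t ≤ u then 1 else 0 : ℕ) : H n) := by
  unfold Ygen
  split_ifs <;> simp only [Nat.cast_one, Nat.cast_zero, add_zero, add_comm]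

theorem yangBaxter_equation (n : ℕ) {α : Type*} [LinearOrder α]
    (j : ℕ) (h : j + 2 < n) (t u v : α) :
    Ygen (n := n) j (by omega) t u * Ygen (n := n) (j + 1) (by omega) t v *
        Ygen (n := n) j (by omega) u v =
      Ygen (n := n) (j + 1) (by omega) u v * Ygen (n := n) j (by omega) t v *
        Ygen (n := n) (j + 1) (by omega) t u := by
  simp only [Ygen_eq_Tpos_add]
  exact braid_add_natCast (Tgen_mul_self _) (Tgen_mul_self _) (Tgen_braid _ _ rfl)
    (ite_le_mul_add_ite_le t u v)

end

end AKSPaper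
end
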